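/- arXiv:1601.05468 — 5 statements merged into one kernel-verified Lean document; each statement's English description precedes it below -/
import Mathlib

section
/- For every real r > 0, the closure of the coamoeba of f(z_1, z_2) = 1 + z_1 + z_2 − r·z_1 z_2 has Haar measure exactly 2π² in T² = (ℝ/2πℤ)². -/
open MeasureTheory Complex

noncomputable section

instance : Fact (0 < 2 * Real.pi) := ⟨by positivity⟩

/-- The real `n`-torus `(ℝ/2πℤ)ⁿ`, carrying the Haar measure of total mass `(2π)ⁿ`. -/
abbrev Torus (n : ℕ) := Fin n → AddCircle (2 * Real.pi)

/-- Projection `ℝⁿ → Tⁿ`. -/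
def toTorus {n : ℕ} (θ : Fin n → ℝ) : Torus n := fun i => (θ i : AddCircle (2 * Real.pi))

/-- The Laurent monomial `z ↦ z^a`. -/
def lmon {n : ℕ} (a : Fin n → ℤ) (z : Fin n → ℂ) : ℂ := ∏ i, z i ^ a i

/-- Evaluation of `Σ_k f_k z^{a_k}`. -/
def evalPoly {n N : ℕ} (a : Fin N → Fin n → ℤ) (f : Fin N → ℂ) (z : Fin n → ℂ) : ℂ :=
  ∑ k, f k * lmon (a k) z

/-- The coamoeba of a function `F` on `(ℂ∖{0})ⁿ`: the image of its zero set under the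
componentwise argument mapping, viewed in the torus `(ℝ/2πℤ)ⁿ`. -/
def coamoebaF {n : ℕ} (F : (Fin n → ℂ) → ℂ) : Set (Torus n) :=
  { θ | ∃ z : Fin n → ℂ, (∀ i, z i ≠ 0) ∧ F z = 0 ∧ θ = toTorus fun i => (z i).arg }

/-- The coamoeba of `Σ_k f_k z^{a_k}`. -/
def coamoeba {n N : ℕ} (a : Fin N → Fin n → ℤ) (f : Fin N → ℂ) : Set (Torus n) :=
  coamoebaF (evalPoly a f)

/-- The matrix `Â` with `k`-th column `(1, a_k)`. -/
def hatA {n : ℕ} (a : Fin (n + 2) → Fin n → ℤ) : Matrix (Fin (n + 1)) (Fin (n + 2)) ℤ :=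
  fun i k => Fin.cases 1 (fun i' => a k i') i

/-- The Gale dual `b_k = (−1)^k det(A_k)`, where `A_k` is `Â` with column `k` deleted. -/
def galeB {n : ℕ} (a : Fin (n + 2) → Fin n → ℤ) (k : Fin (n + 2)) : ℤ :=
  (-1) ^ (k : ℕ) * Matrix.det (Matrix.of fun i j => hatA a i (k.succAbove j))

/-- A nondegenerate circuit: all maximal minors of `Â` are nonvanishing, i.e. every
`n+1` of the `n+2` points affinely span `ℝⁿ`. -/
def NondegCircuit {n : ℕ} (a : Fin (n + 2) → Fin n → ℤ) : Prop :=
  ∀ k, galeB a k ≠ 0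

/-- The normalized volume `Vol(A) = Σ_{k : b_k > 0} b_k`. -/
def volA {n : ℕ} (a : Fin (n + 2) → Fin n → ℤ) : ℤ :=
  ∑ k ∈ Finset.univ.filter (fun k => 0 < galeB a k), galeB a k

/-- The `A`-discriminant binomial associated to a Gale dual vector `b`:
`Δ(x) = Π_{b_k>0} b_k^{b_k} · Π_{b_k<0} x_k^{−b_k} − Π_{b_k<0} b_k^{−b_k} · Π_{b_k>0} x_k^{b_k}`. -/
def discA {n : ℕ} {K : Type*} [Field K] (b : Fin (n + 2) → ℤ) (x : Fin (n + 2) → K) : K :=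
  (∏ k ∈ Finset.univ.filter (fun k => 0 < b k), (b k : K) ^ b k) *
    (∏ k ∈ Finset.univ.filter (fun k => b k < 0), x k ^ (-b k)) -
  (∏ k ∈ Finset.univ.filter (fun k => b k < 0), (b k : K) ^ (-b k)) *
    (∏ k ∈ Finset.univ.filter (fun k => 0 < b k), x k ^ b k)

/-- `f̂(θ) = (c/|c|)·e^{i⟨a,θ⟩}` for a monomial with coefficient `c` and exponent `a`. -/
def fhat {n : ℕ} (a : Fin n → ℤ) (c : ℂ) (θ : Fin n → ℝ) : ℂ :=
  (c / (‖c‖ : ℂ)) * Complex.exp ((∑ i, (a i : ℝ) * θ i) * Complex.I)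

/-- Colopsidedness of `Σ_{k ∈ s} f_k z^{a_k}` at `θ`: all rotated coefficients can be turned
into the closed right half plane, with at least one in the open right half plane. -/
def ColopsidedOn {n N : ℕ} (a : Fin N → Fin n → ℤ) (f : Fin N → ℂ) (s : Finset (Fin N))
    (θ : Fin n → ℝ) : Prop :=
  ∃ φ : ℝ,
    (∀ k ∈ s, 0 ≤ (Complex.exp (φ * Complex.I) * f k *
      Complex.exp ((∑ i, (a k i : ℝ) * θ i) * Complex.I)).re) ∧
    ∃ k ∈ s, 0 < (Complex.exp (φ * Complex.I) * f k *
      Complex.exp ((∑ i, (a k i : ℝ) * θ i) * Complex.I)).re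

/-- A list of monomials (coefficient-exponent pairs) is real at `θ` if all the rotated
coefficients lie on one real line through the origin of `ℂ`. -/
def RealAtMons {n : ℕ} (mons : List (ℂ × (Fin n → ℤ))) (θ : Fin n → ℝ) : Prop :=
  ∃ w : ℂ, w ≠ 0 ∧ ∀ m ∈ mons, ∃ t : ℝ,
    m.1 * Complex.exp ((∑ i, (m.2 i : ℝ) * θ i) * Complex.I) = (t : ℂ) * w

/-- `Σ_k f_k z^{a_k}` is real at `θ` if all the numbers `f_k e^{i⟨a_k,θ⟩}` lie on one
real line through the origin of `ℂ`. -/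
def RealAtIdx {n N : ℕ} (a : Fin N → Fin n → ℤ) (f : Fin N → ℂ) (θ : Fin n → ℝ) : Prop :=
  ∃ w : ℂ, w ≠ 0 ∧ ∀ k, ∃ t : ℝ,
    f k * Complex.exp ((∑ i, (a k i : ℝ) * θ i) * Complex.I) = (t : ℂ) * w

/-- Arguments of critical points of `Σ f_k z^{a_k}`: points of the torus that are
componentwise arguments of some `z ∈ (ℂ∖{0})ⁿ` with `z_j·∂_j f(z) = 0` for all `j`. -/
def critArgs {n N : ℕ} (a : Fin N → Fin n → ℤ) (f : Fin N → ℂ) : Set (Torus n) :=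
  { θ | ∃ z : Fin n → ℂ, (∀ i, z i ≠ 0) ∧
      (∀ j, (∑ k, (a k j : ℂ) * f k * lmon (a k) z) = 0) ∧ θ = toTorus fun i => (z i).arg }

/-- The first polynomial `F₁(z) = f₁ z^{a_0} + z^{a_2} + f₂ z^{a_3}` of a circuit system,
with `f = (f₁, f₂, f₃, f₄)`. -/
def sysF1 (a : Fin 4 → Fin 2 → ℤ) (f : Fin 4 → ℂ) (z : Fin 2 → ℂ) : ℂ :=
  f 0 * lmon (a 0) z + lmon (a 2) z + f 1 * lmon (a 3) z

/-- The second polynomial `F₂(z) = f₃ z^{a_1} + z^{a_2} + f₄ z^{a_3}` of a circuit system,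
with `f = (f₁, f₂, f₃, f₄)`. -/
def sysF2 (a : Fin 4 → Fin 2 → ℤ) (f : Fin 4 → ℂ) (z : Fin 2 → ℂ) : ℂ :=
  f 2 * lmon (a 1) z + lmon (a 2) z + f 3 * lmon (a 3) z

/-- The real points of a lattice configuration, as a subset of `ℝⁿ`. -/
def realPts {n N : ℕ} (a : Fin N → Fin n → ℤ) : Set (Fin n → ℝ) :=
  Set.range fun k => fun i => (a k i : ℝ)

end

/-!
On the zero set of `f = 1 + z + w - r z w` one has `Im w · |r z - 1|² = -(r + 1) Im z`, so `z` and
`w` never lie in the same open half-plane: the coamoeba misses the two open squares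
`(0, π)²` and `(-π, 0)²`, whose closed complement has measure `4π² - 2π² = 2π²`. Conversely every
point `(x, y)` of the two other open squares is attained: with `z = t e^{ix}` the equation forces
`w = (1 + z) / (r z - 1)`, and `arg w = y` becomes a quadratic equation in `t` with a positive
root. The closure of the coamoeba is thus squeezed between two sets of measure `2π²`.
-/

open Set
open scoped Real ComplexConjugate

namespace AddCircle

variable {T : ℝ} [Fact (0 < T)] {t : ℝ} {s : Set ℝ}

lemma coe_mem_image_coe_iff (hs : s ⊆ Ioc t (t + T)) {x : ℝ} (hx : x ∈ Ioc t (t + T)) :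
    (x : AddCircle T) ∈ ((↑) : ℝ → AddCircle T) '' s ↔ x ∈ s := by
  refine ⟨?_, mem_image_of_mem _⟩
  rintro ⟨y, hy, hyx⟩
  rwa [← (coe_eq_coe_iff_of_mem_Ioc (hs hy) hx).1 hyx]

lemma volume_image_coe (hs : IsOpen s) (hsI : s ⊆ Ioc t (t + T)) :
    volume (((↑) : ℝ → AddCircle T) '' s) = volume s := by
  rw [add_projection_respects_measure T t (QuotientAddGroup.isOpenMap_coe s hs).measurableSet]
  congr 1
  ext x
  exact ⟨fun ⟨hx, hxI⟩ => (coe_mem_image_coe_iff hsI hxI).1 hx,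
    fun hx => ⟨mem_image_of_mem _ hx, hsI hx⟩⟩

end AddCircle

namespace Complex

lemma arg_mem_Ioc_neg_pi_add_two_pi (z : ℂ) : arg z ∈ Ioc (-π) (-π + 2 * π) := by
  obtain ⟨h₁, h₂⟩ := arg_mem_Ioc z
  exact ⟨h₁, by linarith⟩

lemma arg_mem_Ioo_zero_pi_iff {z : ℂ} : arg z ∈ Ioo 0 π ↔ 0 < z.im := by
  refine ⟨fun ⟨h₀, hπ⟩ => (arg_nonneg_iff.1 h₀.le).lt_of_ne fun him => ?_, fun him => ?_⟩
  · have hre : 0 ≤ z.re := (arg_lt_pi_iff.1 hπ).resolve_right (not_not.2 him.symm)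
    exact h₀.ne' (arg_eq_zero_iff.2 ⟨hre, him.symm⟩)
  · refine ⟨(arg_nonneg_iff.2 him.le).lt_of_ne fun h => ?_, arg_lt_pi_iff.2 (Or.inr him.ne')⟩
    exact him.ne' (arg_eq_zero_iff.1 h.symm).2

lemma arg_mem_Ioo_neg_pi_zero_iff {z : ℂ} : arg z ∈ Ioo (-π) 0 ↔ z.im < 0 := by
  rw [mem_Ioo, arg_neg_iff, and_iff_right (neg_pi_lt_arg z)]

lemma arg_ofReal_mul_exp_mul_I {t θ : ℝ} (ht : 0 < t) (hθ : θ ∈ Ioc (-π) π) :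
    arg (t * exp (θ * I)) = θ := by
  rw [exp_mul_I, arg_mul_cos_add_sin_mul_I ht hθ]

lemma arg_eq_of_im_mul_exp_neg_eq_zero {z : ℂ} {θ : ℝ} (hθ : θ ∈ Ioo 0 π) (hz : 0 < z.im)
    (h : (z * exp (-(θ * I))).im = 0) : arg z = θ := by
  set s := (z * exp (-(θ * I))).re
  have hrot : z * exp (-(θ * I)) = s := ext rfl (by simpa using h)
  have hzs : z = s * exp (θ * I) := by
    rw [← hrot, mul_assoc, ← exp_add, neg_add_cancel, exp_zero, mul_one]
  have hs : 0 < s := by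
    rw [hzs, im_ofReal_mul, exp_ofReal_mul_I_im] at hz
    exact pos_of_mul_pos_left hz (Real.sin_pos_of_pos_of_lt_pi hθ.1 hθ.2).le
  rw [hzs, arg_ofReal_mul_exp_mul_I hs ⟨by linarith [hθ.1, Real.pi_pos], hθ.2.le⟩]

lemma ne_zero_of_arg_ne_zero {z : ℂ} (h : arg z ≠ 0) : z ≠ 0 := by
  rintro rfl
  exact h arg_zero

end Complex

lemma exists_pos_root_of_neg_of_pos {a b c : ℝ} (ha : a < 0) (hc : 0 < c) :
    ∃ t, 0 < t ∧ a * (t * t) + b * t + c = 0 := by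
  have hd : b ^ 2 < discrim a b c := by rw [discrim]; nlinarith
  have hb : |b| < √(discrim a b c) := by
    rw [← Real.sqrt_sq_eq_abs]; exact Real.sqrt_lt_sqrt (sq_nonneg b) hd
  refine ⟨(-b - √(discrim a b c)) / (2 * a), div_pos_of_neg_of_neg ?_ (by linarith), ?_⟩
  · linarith [neg_abs_le b]
  · exact (quadratic_eq_zero_iff ha.ne
      (Real.mul_self_sqrt ((sq_nonneg b).trans hd.le)).symm _).2 (Or.inr rfl)

lemma im_exp_mul_one_add_mul_conj (r t x y : ℝ) :
    (exp (-(y * I)) * ((1 + t * exp (x * I)) * conj (r * (t * exp (x * I)) - 1))).im =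
      -(r * Real.sin y) * (t * t) + -(r * Real.sin (x + y) + Real.sin (x - y)) * t +
        Real.sin y := by
  have hneg : -((y : ℂ) * I) = ((-y : ℝ) : ℂ) * I := by push_cast; ring
  have hconj : conj (exp (x * I)) = exp (((-x : ℝ) : ℂ) * I) := by
    rw [← exp_conj, map_mul, conj_ofReal, conj_I]; push_cast; ring_nf
  simp only [hneg, hconj, map_sub, map_mul, map_one, conj_ofReal,
    mul_im, mul_re, sub_re, sub_im, add_re, add_im, one_re, one_im, ofReal_re, ofReal_im,
    exp_ofReal_mul_I_re, exp_ofReal_mul_I_im, Real.sin_neg, Real.cos_neg, Real.sin_add,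
    Real.sin_sub]
  linear_combination (-(r * t * t * Real.sin y)) * Real.sin_sq_add_cos_sq x

def upperArc : Set (AddCircle (2 * π)) := (↑) '' Ioo 0 π

def lowerArc : Set (AddCircle (2 * π)) := (↑) '' Ioo (-π) 0

lemma Ioo_zero_pi_subset_Ioc : Ioo 0 π ⊆ Ioc (-π) (-π + 2 * π) :=
  fun _ hx => ⟨by linarith [hx.1, Real.pi_pos], by linarith [hx.2]⟩

lemma Ioo_neg_pi_zero_subset_Ioc : Ioo (-π) 0 ⊆ Ioc (-π) (-π + 2 * π) :=
  fun _ hx => ⟨hx.1, by linarith [hx.2, Real.pi_pos]⟩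

lemma isOpen_upperArc : IsOpen upperArc := QuotientAddGroup.isOpenMap_coe _ isOpen_Ioo

lemma isOpen_lowerArc : IsOpen lowerArc := QuotientAddGroup.isOpenMap_coe _ isOpen_Ioo

lemma volume_upperArc : volume upperArc = ENNReal.ofReal π := by
  rw [upperArc, AddCircle.volume_image_coe isOpen_Ioo Ioo_zero_pi_subset_Ioc, Real.volume_Ioo,
    sub_zero]

lemma volume_lowerArc : volume lowerArc = ENNReal.ofReal π := by
  rw [lowerArc, AddCircle.volume_image_coe isOpen_Ioo Ioo_neg_pi_zero_subset_Ioc, Real.volume_Ioo,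
    zero_sub, neg_neg]

lemma disjoint_upperArc_lowerArc : Disjoint upperArc lowerArc := by
  refine Set.disjoint_left.2 ?_
  rintro _ ⟨x, hx, rfl⟩ hy
  rw [lowerArc, AddCircle.coe_mem_image_coe_iff Ioo_neg_pi_zero_subset_Ioc
    (Ioo_zero_pi_subset_Ioc hx)] at hy
  exact (hx.1.trans hy.2).false

lemma coe_arg_mem_upperArc_iff (z : ℂ) : (arg z : AddCircle (2 * π)) ∈ upperArc ↔ 0 < z.im := by
  rw [upperArc, AddCircle.coe_mem_image_coe_iff Ioo_zero_pi_subset_Ioc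
    (arg_mem_Ioc_neg_pi_add_two_pi z), arg_mem_Ioo_zero_pi_iff]

lemma coe_arg_mem_lowerArc_iff (z : ℂ) : (arg z : AddCircle (2 * π)) ∈ lowerArc ↔ z.im < 0 := by
  rw [lowerArc, AddCircle.coe_mem_image_coe_iff Ioo_neg_pi_zero_subset_Ioc
    (arg_mem_Ioc_neg_pi_add_two_pi z), arg_mem_Ioo_neg_pi_zero_iff]


def box (A B : Set (AddCircle (2 * π))) : Set (Torus 2) := {θ | θ 0 ∈ A ∧ θ 1 ∈ B}

section Box

variable {A B C D : Set (AddCircle (2 * π))}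

lemma box_eq_pi (A B : Set (AddCircle (2 * π))) : box A B = univ.pi ![A, B] := by
  ext θ
  simp [box, Fin.forall_fin_two]

lemma isOpen_box (hA : IsOpen A) (hB : IsOpen B) : IsOpen (box A B) :=
  (hA.preimage (continuous_apply 0)).inter (hB.preimage (continuous_apply 1))

lemma volume_box (A B : Set (AddCircle (2 * π))) : volume (box A B) = volume A * volume B := by
  rw [box_eq_pi, volume_pi_pi, Fin.prod_univ_two]
  rfl

lemma volume_box_union_box (hAC : Disjoint A C) (hCD : MeasurableSet (box C D)) :
    volume (box A B ∪ box C D) = volume A * volume B + volume C * volume D := by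
  have hdisj : Disjoint (box A B) (box C D) :=
    Set.disjoint_left.2 fun _ hAB hCD => Set.disjoint_left.1 hAC hAB.1 hCD.1
  rw [measure_union hdisj hCD, volume_box, volume_box]

end Box

lemma volume_univ_torus_two : volume (univ : Set (Torus 2)) = ENNReal.ofReal (4 * π ^ 2) := by
  rw [volume_pi, Measure.pi_univ, Fin.prod_univ_two, AddCircle.measure_univ,
    ← ENNReal.ofReal_mul (by positivity)]
  ring_nf

def sameSignBoxes : Set (Torus 2) := box upperArc upperArc ∪ box lowerArc lowerArc

def oppositeSignBoxes : Set (Torus 2) := box lowerArc upperArc ∪ box upperArc lowerArc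

lemma isOpen_sameSignBoxes : IsOpen sameSignBoxes :=
  (isOpen_box isOpen_upperArc isOpen_upperArc).union (isOpen_box isOpen_lowerArc isOpen_lowerArc)

lemma ofReal_pi_mul_self_add : ENNReal.ofReal π * ENNReal.ofReal π +
    ENNReal.ofReal π * ENNReal.ofReal π = ENNReal.ofReal (2 * π ^ 2) := by
  rw [← ENNReal.ofReal_mul Real.pi_pos.le, ← ENNReal.ofReal_add (by positivity) (by positivity)]
  ring_nf

lemma volume_sameSignBoxes : volume sameSignBoxes = ENNReal.ofReal (2 * π ^ 2) := by
  rw [sameSignBoxes, volume_box_union_box disjoint_upperArc_lowerArc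
    (isOpen_box isOpen_lowerArc isOpen_lowerArc).measurableSet, volume_upperArc, volume_lowerArc,
    ofReal_pi_mul_self_add]

lemma volume_compl_sameSignBoxes : volume sameSignBoxesᶜ = ENNReal.ofReal (2 * π ^ 2) := by
  rw [measure_compl isOpen_sameSignBoxes.measurableSet (measure_ne_top _ _),
    volume_sameSignBoxes, volume_univ_torus_two, ← ENNReal.ofReal_sub _ (by positivity)]
  ring_nf

lemma volume_oppositeSignBoxes : volume oppositeSignBoxes = ENNReal.ofReal (2 * π ^ 2) := by
  rw [oppositeSignBoxes, volume_box_union_box disjoint_upperArc_lowerArc.symm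
    (isOpen_box isOpen_upperArc isOpen_lowerArc).measurableSet, volume_upperArc, volume_lowerArc,
    ofReal_pi_mul_self_add]

lemma mem_coamoebaF_of_eq_zero {F : (Fin 2 → ℂ) → ℂ} {θ : Torus 2} {z w : ℂ} (hz : z ≠ 0)
    (hw : w ≠ 0) (hF : F ![z, w] = 0) (h0 : θ 0 = arg z) (h1 : θ 1 = arg w) :
    θ ∈ coamoebaF F :=
  ⟨![z, w], Fin.forall_fin_two.2 ⟨hz, hw⟩, hF, funext <| Fin.forall_fin_two.2 ⟨h0, h1⟩⟩

def unitSquarePoly (r : ℝ) (z : Fin 2 → ℂ) : ℂ := 1 + z 0 + z 1 - r * (z 0 * z 1)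


section UnitSquare

variable {r : ℝ} {z w : ℂ}

lemma im_mul_normSq_eq_of_eq_zero (h : 1 + z + w - r * (z * w) = 0) :
    w.im * normSq (r * z - 1) = -(r + 1) * z.im := by
  have hre := congrArg re h
  have him := congrArg im h
  simp only [sub_re, add_re, one_re, mul_re, ofReal_re, ofReal_im, sub_im, add_im, one_im,
    mul_im, zero_re, zero_im] at hre him
  rw [normSq_apply]
  simp only [sub_re, mul_re, ofReal_re, ofReal_im, one_re, sub_im, mul_im, one_im]
  linear_combination (-(r * z.re - 1)) * him + (r * z.im) * hre

lemma im_mul_im_nonpos_of_eq_zero (hr : 0 < r) (h : 1 + z + w - r * (z * w) = 0) :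
    z.im * w.im ≤ 0 := by
  by_contra! hpos
  have key : z.im * w.im * normSq (r * z - 1) = -((r + 1) * z.im ^ 2) := by
    linear_combination z.im * im_mul_normSq_eq_of_eq_zero h
  have hsq := sq_pos_of_ne_zero (left_ne_zero_of_mul hpos.ne')
  nlinarith [mul_nonneg hpos.le (normSq_nonneg (r * z - 1)), mul_pos (by linarith : 0 < r + 1) hsq]

lemma exists_eq_zero_and_arg_eq (hr : 0 < r) {x y : ℝ} (hx : x ∈ Ioo (-π) 0)
    (hy : y ∈ Ioo 0 π) : ∃ z w : ℂ, 1 + z + w - r * (z * w) = 0 ∧ arg z = x ∧ arg w = y := by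
  have hsx : Real.sin x < 0 := Real.sin_neg_of_neg_of_neg_pi_lt hx.2 hx.1
  have hsy : 0 < Real.sin y := Real.sin_pos_of_pos_of_lt_pi hy.1 hy.2
  -- `t` is chosen so that `w e^{-iy}` below is real, by `im_exp_mul_one_add_mul_conj`.
  obtain ⟨t, ht, hroot⟩ := exists_pos_root_of_neg_of_pos
    (b := -(r * Real.sin (x + y) + Real.sin (x - y))) (neg_neg_of_pos (mul_pos hr hsy)) hsy
  set z : ℂ := t * exp (x * I)
  have hz_im : z.im < 0 := by
    rw [im_ofReal_mul, exp_ofReal_mul_I_im]; exact mul_neg_of_pos_of_neg ht hsx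
  have hden : r * z - 1 ≠ 0 := fun h0 => by
    have := congrArg im h0
    simp only [sub_im, mul_im, ofReal_re, ofReal_im, one_im, zero_mul, add_zero, sub_zero,
      zero_im] at this
    exact (mul_neg_of_pos_of_neg hr hz_im).ne this
  set w := (1 + z) / (r * z - 1)
  have hzero : 1 + z + w - r * (z * w) = 0 := by
    linear_combination -(div_mul_cancel₀ (1 + z) hden)
  have hw_im : 0 < w.im := by
    have hprod : 0 < w.im * normSq (r * z - 1) := by
      rw [im_mul_normSq_eq_of_eq_zero hzero]; nlinarith
    exact pos_of_mul_pos_left hprod (normSq_nonneg _)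
  refine ⟨z, w, hzero, arg_ofReal_mul_exp_mul_I ht ⟨hx.1, hx.2.le.trans Real.pi_pos.le⟩, ?_⟩
  refine arg_eq_of_im_mul_exp_neg_eq_zero hy hw_im ?_
  have hw : w * exp (-(y * I)) =
      exp (-(y * I)) * ((1 + z) * conj (r * z - 1)) / (normSq (r * z - 1) : ℂ) := by
    rw [← mul_conj, ← mul_assoc, mul_div_mul_right _ _ ((map_ne_zero conj).2 hden)]
    ring
  rw [hw, div_ofReal_im, im_exp_mul_one_add_mul_conj, hroot, zero_div]

lemma coamoebaF_unitSquarePoly_subset (hr : 0 < r) :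
    coamoebaF (unitSquarePoly r) ⊆ sameSignBoxesᶜ := by
  rintro θ ⟨z, hz, hF, rfl⟩ (⟨h0, h1⟩ | ⟨h0, h1⟩) <;>
    have hsign := im_mul_im_nonpos_of_eq_zero hr hF
  · exact (mul_pos ((coe_arg_mem_upperArc_iff _).1 h0)
      ((coe_arg_mem_upperArc_iff _).1 h1)).not_ge hsign
  · exact (mul_pos_of_neg_of_neg ((coe_arg_mem_lowerArc_iff _).1 h0)
      ((coe_arg_mem_lowerArc_iff _).1 h1)).not_ge hsign

lemma oppositeSignBoxes_subset_coamoebaF (hr : 0 < r) :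
    oppositeSignBoxes ⊆ coamoebaF (unitSquarePoly r) := by
  rintro θ (⟨⟨x, hx, hx0⟩, ⟨y, hy, hy1⟩⟩ | ⟨⟨y, hy, hy0⟩, ⟨x, hx, hx1⟩⟩)
  all_goals
    obtain ⟨z, w, hzero, hz, hw⟩ := exists_eq_zero_and_arg_eq hr hx hy
    have hz0 := ne_zero_of_arg_ne_zero (hz ▸ hx.2.ne)
    have hw0 := ne_zero_of_arg_ne_zero (hw ▸ hy.1.ne')
  · exact mem_coamoebaF_of_eq_zero hz0 hw0 hzero (hz ▸ hx0.symm) (hw ▸ hy1.symm)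
  · refine mem_coamoebaF_of_eq_zero hw0 hz0 ?_ (hw ▸ hy0.symm) (hz ▸ hx1.symm)
    simp only [unitSquarePoly, Matrix.cons_val_zero, Matrix.cons_val_one]
    linear_combination hzero

end UnitSquare

/-- For every real `r > 0`, the closed coamoeba of
`f(z₁,z₂) = 1 + z₁ + z₂ − r·z₁z₂` has Haar measure exactly `2π²` in `T²`. -/
theorem coamoeba_area_unit_square (r : ℝ) (hr : 0 < r) :
    volume (closure (coamoebaF fun z : Fin 2 → ℂ =>
        1 + z 0 + z 1 - (r : ℂ) * (z 0 * z 1))) =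
      ENNReal.ofReal (2 * Real.pi ^ 2) := by
  change volume (closure (coamoebaF (unitSquarePoly r))) = _
  refine le_antisymm ?_ ?_
  · calc volume (closure (coamoebaF (unitSquarePoly r))) ≤ volume sameSignBoxesᶜ :=
          measure_mono (closure_minimal (coamoebaF_unitSquarePoly_subset hr)
            isOpen_sameSignBoxes.isClosed_compl)
      _ = _ := volume_compl_sameSignBoxes
  · calc ENNReal.ofReal (2 * π ^ 2) = volume oppositeSignBoxes := volume_oppositeSignBoxes.symm
      _ ≤ _ := measure_mono ((oppositeSignBoxes_subset_coamoebaF hr).trans subset_closure)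
end

section
/- Let A ⊂ ℤ^n be a finite set of points affinely spanning ℝ^n and let f = (f_a)_{a∈A} with all f_a ∈ ℂ∖{0}. Suppose f is real at θ_0 ∈ ℝ^n. Then f is real at θ ∈ ℝ^n if and only if θ ∈ θ_0 + πL, where L = {x ∈ ℝ^n : ⟨a − a', x⟩ ∈ ℤ for all a, a' ∈ A} is the dual lattice of the lattice generated by the differences of A. -/
/-! Nonzero numbers lie on one real line through the origin iff all their pairwise ratios
are real. The ratio of the rotated coefficients `f_j e^{i⟨a_j,θ⟩}` and `f_k e^{i⟨a_k,θ⟩}`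
is its value at `θ₀`, a nonzero real, times `e^{i⟨a_j - a_k, θ - θ₀⟩}`; so it is real
iff `⟨a_j - a_k, θ - θ₀⟩ ∈ πℤ`. -/

open MeasureTheory Complex

section RealLine

variable {ι m : Type*} [Fintype m]

def OnRealLine (u : ι → ℂ) : Prop :=
  ∃ w : ℂ, w ≠ 0 ∧ ∀ k, ∃ t : ℝ, u k = t * w

theorem onRealLine_iff_im_div_eq_zero {u : ι → ℂ} (hu : ∀ k, u k ≠ 0) :
    OnRealLine u ↔ ∀ j k, (u j / u k).im = 0 := by
  constructor
  · rintro ⟨w, hw, ht⟩ j k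
    obtain ⟨tj, htj⟩ := ht j
    obtain ⟨tk, htk⟩ := ht k
    rw [htj, htk, mul_div_mul_right _ _ hw, ← ofReal_div, ofReal_im]
  · intro hreal
    rcases isEmpty_or_nonempty ι with _ | ⟨⟨k₀⟩⟩
    · exact ⟨1, one_ne_zero, isEmptyElim⟩
    · refine ⟨u k₀, hu k₀, fun k => ⟨(u k / u k₀).re, ?_⟩⟩
      have hratio : ((u k / u k₀).re : ℂ) = u k / u k₀ :=
        ext (ofReal_re _) (by rw [ofReal_im, hreal k k₀])
      rw [hratio, div_mul_cancel₀ _ (hu k₀)]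

theorem im_mul_exp_eq_zero_iff {r : ℂ} (hr : r.im = 0) (hr₀ : r ≠ 0) (φ : ℝ) :
    (r * exp (φ * I)).im = 0 ↔ Real.sin φ = 0 := by
  lift r to ℝ using hr
  rw [im_ofReal_mul, exp_ofReal_mul_I_im, mul_eq_zero, or_iff_right (ofReal_ne_zero.mp hr₀)]

noncomputable def rotatedCoeffs (v : ι → m → ℝ) (f : ι → ℂ) (θ : m → ℝ) (k : ι) : ℂ :=
  f k * exp ((v k ⬝ᵥ θ : ℝ) * I)

theorem rotatedCoeffs_ne_zero {v : ι → m → ℝ} {f : ι → ℂ} (hf : ∀ k, f k ≠ 0)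
    (θ : m → ℝ) (k : ι) :
    rotatedCoeffs v f θ k ≠ 0 :=
  mul_ne_zero (hf k) (exp_ne_zero _)

theorem rotatedCoeffs_div_rotatedCoeffs (v : ι → m → ℝ) (f : ι → ℂ) (θ₀ θ : m → ℝ)
    (j k : ι) :
    rotatedCoeffs v f θ j / rotatedCoeffs v f θ k =
      rotatedCoeffs v f θ₀ j / rotatedCoeffs v f θ₀ k *
        exp (((v j - v k) ⬝ᵥ (θ - θ₀) : ℝ) * I) := by
  simp only [rotatedCoeffs, sub_dotProduct, dotProduct_sub, ofReal_sub, sub_mul, exp_sub]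
  field_simp

theorem onRealLine_rotatedCoeffs_iff {v : ι → m → ℝ} {f : ι → ℂ} (hf : ∀ k, f k ≠ 0)
    {θ₀ : m → ℝ} (h₀ : OnRealLine (rotatedCoeffs v f θ₀)) (θ : m → ℝ) :
    OnRealLine (rotatedCoeffs v f θ) ↔ ∀ j k, ∃ n : ℤ, n * Real.pi = (v j - v k) ⬝ᵥ (θ - θ₀) := by
  rw [onRealLine_iff_im_div_eq_zero (rotatedCoeffs_ne_zero hf θ₀)] at h₀
  rw [onRealLine_iff_im_div_eq_zero (rotatedCoeffs_ne_zero hf θ)]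
  refine forall₂_congr fun j k => ?_
  have hratio₀ : rotatedCoeffs v f θ₀ j / rotatedCoeffs v f θ₀ k ≠ 0 :=
    div_ne_zero (rotatedCoeffs_ne_zero hf θ₀ j) (rotatedCoeffs_ne_zero hf θ₀ k)
  rw [rotatedCoeffs_div_rotatedCoeffs v f θ₀, im_mul_exp_eq_zero_iff (h₀ j k) hratio₀,
    Real.sin_eq_zero_iff]

theorem forall_exists_int_mul_pi_iff (v : ι → m → ℝ) (φ : m → ℝ) :
    (∀ j k, ∃ n : ℤ, n * Real.pi = (v j - v k) ⬝ᵥ φ) ↔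
      ∃ x : m → ℝ, (∀ j k, ∃ n : ℤ, (v j - v k) ⬝ᵥ x = n) ∧ φ = Real.pi • x := by
  constructor
  · intro h
    refine ⟨Real.pi⁻¹ • φ, fun j k => ?_, by rw [smul_inv_smul₀ Real.pi_ne_zero]⟩
    obtain ⟨n, hn⟩ := h j k
    exact ⟨n, by rw [dotProduct_smul, ← hn, smul_eq_mul]; field_simp⟩
  · rintro ⟨x, hx, rfl⟩ j k
    obtain ⟨n, hn⟩ := hx j k
    exact ⟨n, by rw [dotProduct_smul, hn, smul_eq_mul, mul_comm]⟩

end RealLine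

theorem realAt_iff_dual_lattice_general {n N : ℕ} (a : Fin N → Fin n → ℤ)
    (f : Fin N → ℂ) (hf : ∀ k, f k ≠ 0) (θ₀ : Fin n → ℝ)
    (h0 : RealAtIdx a f θ₀) (θ : Fin n → ℝ) :
    RealAtIdx a f θ ↔
      ∃ x : Fin n → ℝ,
        (∀ j k : Fin N, ∃ m : ℤ, (∑ i, ((a j i : ℝ) - (a k i : ℝ)) * x i) = m) ∧
        θ = θ₀ + Real.pi • x := by
  set v : Fin N → Fin n → ℝ := fun k i => a k i
  have hreal (θ : Fin n → ℝ) : RealAtIdx a f θ ↔ OnRealLine (rotatedCoeffs v f θ) := Iff.rfl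
  rw [hreal, onRealLine_rotatedCoeffs_iff hf ((hreal θ₀).mp h0), forall_exists_int_mul_pi_iff]
  simp only [sub_eq_iff_eq_add']
  rfl

/-- If `f` is real at `θ₀`, then `f` is real at `θ` if and only if
`θ ∈ θ₀ + πL`, where `L` is the dual lattice of the lattice generated by the
differences of the support. -/
theorem realAt_iff_dual_lattice {n N : ℕ} (a : Fin N → Fin n → ℤ)
    (hinj : Function.Injective a)
    (hspan : Submodule.span ℝ
      {x : Fin n → ℝ | ∃ j k : Fin N,
        x = (fun i => (a j i : ℝ)) - fun i => (a k i : ℝ)} = ⊤)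
    (f : Fin N → ℂ) (hf : ∀ k, f k ≠ 0) (θ₀ : Fin n → ℝ)
    (h0 : RealAtIdx a f θ₀) (θ : Fin n → ℝ) :
    RealAtIdx a f θ ↔
      ∃ x : Fin n → ℝ,
        (∀ j k : Fin N, ∃ m : ℤ, (∑ i, ((a j i : ℝ) - (a k i : ℝ)) * x i) = m) ∧
        θ = θ₀ + Real.pi • x :=
  realAt_iff_dual_lattice_general a f hf θ₀ h0 θ
end

section
/- Let A = {a_0,…,a_{n+1}} ⊂ ℤ^n be a nondegenerate circuit such that the lattice generated by the differences {a − a' : a, a' ∈ A} is all of ℤ^n, let f ∈ (ℂ∖{0})^{n+2}, and fix κ ∈ {0,…,n+1}. For each θ ∈ T^n admitting a φ(θ) ∈ ℝ with e^{iφ(θ)}·f̂_k(θ) = δ_k for all k ≠ κ (such φ(θ) is unique modulo 2π), define φ_θ ∈ ℝ/2πℤ by φ_θ ≡ arg(δ_κ) − φ(θ) − ⟨a_κ, θ⟩ (mod 2π), i.e. φ_θ is the unique argument value for the coefficient f_κ that would give e^{iφ(θ)}·f̂_κ(θ) = δ_κ. Then the assignment θ ↦ φ_θ is injective: distinct such θ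 ∈ T^n yield distinct φ_θ. -/
open MeasureTheory Complex

open Real

/-!
The condition `e^{iφ}·f̂_k(θ) = δ_k` pins down the phase `φ + ⟨a_k, θ⟩` modulo `2π` for every
`k ≠ κ`, and the hypothesis on `φ_θ` does the same for `k = κ`. Subtracting the phases of two
solutions `θ₁, θ₂`, the angle `⟨a_k, θ₁ - θ₂⟩ ∈ ℝ/2πℤ` does not depend on `k`, so the character
`d ↦ ⟨d, θ₁ - θ₂⟩` of `ℤⁿ` vanishes on all differences `a_j - a_k`. These generate `ℤⁿ`, so it
vanishes on the unit vectors, i.e. `θ₁ = θ₂` in the torus.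
-/

lemma AddCircle.coe_eq_coe_of_exp_mul_I_eq {x y : ℝ} (h : exp (x * I) = exp (y * I)) :
    (x : AddCircle (2 * π)) = y := by
  apply AddCircle.injective_toCircle two_pi_pos.ne'
  simp only [AddCircle.toCircle_apply_mk, div_self two_pi_pos.ne', one_mul]
  ext
  simpa only [Circle.coe_exp] using h

lemma Fintype.eq_zero_of_linearCombination_eq_zero {ι R M : Type*} [Fintype ι] [Semiring R]
    [AddCommMonoid M] [Module R M] {S : Set (ι → R)} (hS : Submodule.span R S = ⊤) {v : ι → M}
    (hv : ∀ d ∈ S, Fintype.linearCombination R v d = 0) : v = 0 := by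
  classical
  have hzero : Fintype.linearCombination R v = 0 := LinearMap.ext_on hS hv
  funext i
  simpa using LinearMap.congr_fun hzero (Pi.single i 1)

lemma linearCombination_toTorus {n : ℕ} (θ : Fin n → ℝ) (d : Fin n → ℤ) :
    Fintype.linearCombination ℤ (toTorus θ) d = ((∑ i, (d i : ℝ) * θ i : ℝ) : AddCircle (2 * π)) := by
  simp [Fintype.linearCombination_apply, toTorus, ← zsmul_eq_mul]

lemma exp_mul_I_mul_fhat {n : ℕ} (a : Fin n → ℤ) (c : ℂ) (θ : Fin n → ℝ) (φ : ℝ) :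
    exp (φ * I) * fhat a c θ = c / (‖c‖ : ℂ) * exp ((φ + ∑ i, (a i : ℝ) * θ i) * I) := by
  rw [fhat, add_mul, Complex.exp_add]
  ring

lemma exp_phase_eq_of_fhat_eq {n : ℕ} {a : Fin n → ℤ} {c : ℂ} (hc : c ≠ 0) {θ₁ θ₂ : Fin n → ℝ}
    {φ₁ φ₂ : ℝ} (h : exp (φ₁ * I) * fhat a c θ₁ = exp (φ₂ * I) * fhat a c θ₂) :
    exp ((φ₁ + ∑ i, (a i : ℝ) * θ₁ i) * I) = exp ((φ₂ + ∑ i, (a i : ℝ) * θ₂ i) * I) := by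
  rw [exp_mul_I_mul_fhat, exp_mul_I_mul_fhat] at h
  exact mul_left_cancel₀ (div_ne_zero hc (ofReal_ne_zero.mpr (norm_ne_zero_iff.mpr hc))) h

theorem unique_last_arguments_general {n : ℕ} (a : Fin (n + 2) → Fin n → ℤ)
    (hlat : Submodule.span ℤ {d : Fin n → ℤ | ∃ j k : Fin (n + 2), d = a j - a k} = ⊤)
    (f : Fin (n + 2) → ℂ) (hf : ∀ k, f k ≠ 0) (κ : Fin (n + 2))
    (θ₁ θ₂ : Fin n → ℝ) (φ₁ φ₂ : ℝ)
    (h1 : ∀ k, k ≠ κ →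
      Complex.exp (φ₁ * Complex.I) * fhat (a k) (f k) θ₁ = ((galeB a k).sign : ℂ))
    (h2 : ∀ k, k ≠ κ →
      Complex.exp (φ₂ * Complex.I) * fhat (a k) (f k) θ₂ = ((galeB a k).sign : ℂ))
    (heq : Complex.exp ((φ₁ + ∑ i, (a κ i : ℝ) * θ₁ i) * Complex.I) =
      Complex.exp ((φ₂ + ∑ i, (a κ i : ℝ) * θ₂ i) * Complex.I)) :
    toTorus θ₁ = toTorus θ₂ := by
  have hphase : ∀ k, ((φ₁ + ∑ i, (a k i : ℝ) * θ₁ i : ℝ) : AddCircle (2 * π)) =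
      (φ₂ + ∑ i, (a k i : ℝ) * θ₂ i : ℝ) := by
    intro k
    apply AddCircle.coe_eq_coe_of_exp_mul_I_eq
    rw [ofReal_add, ofReal_add]
    by_cases hk : k = κ
    · exact hk ▸ heq
    · exact exp_phase_eq_of_fhat_eq (hf k) ((h1 k hk).trans (h2 k hk).symm)
  have hpair : ∀ k, Fintype.linearCombination ℤ (toTorus (θ₁ - θ₂)) (a k) =
      ((φ₂ - φ₁ : ℝ) : AddCircle (2 * π)) := by
    intro k
    have hsplit : ∑ i, (a k i : ℝ) * (θ₁ - θ₂) i = (φ₂ - φ₁) +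
        ((φ₁ + ∑ i, (a k i : ℝ) * θ₁ i) - (φ₂ + ∑ i, (a k i : ℝ) * θ₂ i)) := by
      simp only [Pi.sub_apply, mul_sub, Finset.sum_sub_distrib]
      ring
    rw [linearCombination_toTorus, hsplit, AddCircle.coe_add,
      AddCircle.coe_sub (p := 2 * π) (φ₁ + _), hphase, sub_self, add_zero]
  have hzero : toTorus (θ₁ - θ₂) = 0 := by
    refine Fintype.eq_zero_of_linearCombination_eq_zero hlat ?_
    rintro _ ⟨j, k, rfl⟩
    rw [map_sub, hpair, hpair, sub_self]
  rw [← sub_eq_zero, ← hzero]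
  funext i
  simp [toTorus]

/-- Assume the differences of the circuit generate `ℤⁿ` and fix `κ`.
If `θ₁, θ₂` (given by representatives in `ℝⁿ`) admit rotations `φ₁, φ₂` with
`e^{iφ_j}·f̂_k(θ_j) = δ_k` for all `k ≠ κ`, and the induced argument values `φ_θ` for the
`κ`-th coefficient coincide (i.e. `e^{i(φ₁+⟨a_κ,θ₁⟩)} = e^{i(φ₂+⟨a_κ,θ₂⟩)}`), then
`θ₁ = θ₂` on the torus. -/
theorem unique_last_arguments {n : ℕ} (a : Fin (n + 2) → Fin n → ℤ)
    (ha : NondegCircuit a)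
    (hlat : Submodule.span ℤ {d : Fin n → ℤ | ∃ j k : Fin (n + 2), d = a j - a k} = ⊤)
    (f : Fin (n + 2) → ℂ) (hf : ∀ k, f k ≠ 0) (κ : Fin (n + 2))
    (θ₁ θ₂ : Fin n → ℝ) (φ₁ φ₂ : ℝ)
    (h1 : ∀ k, k ≠ κ →
      Complex.exp (φ₁ * Complex.I) * fhat (a k) (f k) θ₁ = ((galeB a k).sign : ℂ))
    (h2 : ∀ k, k ≠ κ →
      Complex.exp (φ₂ * Complex.I) * fhat (a k) (f k) θ₂ = ((galeB a k).sign : ℂ))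
    (heq : Complex.exp ((φ₁ + ∑ i, (a κ i : ℝ) * θ₁ i) * Complex.I) =
      Complex.exp ((φ₂ + ∑ i, (a κ i : ℝ) * θ₂ i) * Complex.I)) :
    toTorus θ₁ = toTorus θ₂ :=
  unique_last_arguments_general a hlat f hf κ θ₁ θ₂ φ₁ φ₂ h1 h2 heq
end

section
/- Let A = {a_0, a_1, a_2, a_3} ⊂ ℤ² be a nondegenerate planar circuit and consider the system F_1(z) = f_1 z^{a_0} + z^{a_2} + f_2 z^{a_3}, F_2(z) = f_3 z^{a_1} + z^{a_2} + f_4 z^{a_3}. Suppose the line ℓ through a_2 and a_3 intersects the interior of conv(A). Then for every compact set K ⊂ (ℂ∖{0})^4 of coefficient tuples (f_1, f_2, f_3, f_4), the set ∪_{(f_1,…,f_4)∈K} { (log|z_1|, log|z_2|) : z ∈ (ℂ∖{0})², F_1(z) = F_2(z) = 0 } is a bounded subset of ℝ². -/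
open MeasureTheory Complex

/-! For `x = Log z` with `z` a common zero of `F₁, F₂`, the triangle inequality forces the
largest of the three monomial sizes `log|f_k| + ⟨a_k, x⟩` of each trinomial to be attained twice
up to `log 2`. As `log|f_k|` is bounded on the compact `K`, the tropical defect `h(x)`, the larger
of the two gaps between the largest and the second largest `⟨a_k, x⟩` in each trinomial, is
bounded on the amoeba. Now `h` is continuous, positively homogeneous, and positive away from `0`:
if both maxima are attained twice at `u ≠ 0`, then either three of the `a_k` lie on a line
orthogonal to `u`, against nondegeneracy, or `⟨a₂, u⟩ = ⟨a₃, u⟩` is the strict maximum, so that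
the line through `a₂, a₃` supports `conv(A)`. Hence `h(x) ≥ ε‖x‖` for some `ε > 0`. -/

theorem log_norm_le_log_two_add_max {E : Type*} [NormedAddCommGroup E] {u v w : E}
    (h : u + v + w = 0) (hu : u ≠ 0) (hv : v ≠ 0) (hw : w ≠ 0) :
    Real.log ‖u‖ ≤ Real.log 2 + max (Real.log ‖v‖) (Real.log ‖w‖) := by
  have hv' : 0 < ‖v‖ := norm_pos_iff.2 hv
  have hw' : 0 < ‖w‖ := norm_pos_iff.2 hw
  have huvw : ‖u‖ ≤ 2 * max ‖v‖ ‖w‖ := calc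
    ‖u‖ = ‖v + w‖ := by rw [eq_neg_of_add_eq_zero_left ((add_assoc u v w).symm.trans h), norm_neg]
    _ ≤ ‖v‖ + ‖w‖ := norm_add_le v w
    _ ≤ 2 * max ‖v‖ ‖w‖ := by linarith [le_max_left ‖v‖ ‖w‖, le_max_right ‖v‖ ‖w‖]
  calc Real.log ‖u‖ ≤ Real.log (2 * max ‖v‖ ‖w‖) := Real.log_le_log (norm_pos_iff.2 hu) huvw
    _ = Real.log 2 + max (Real.log ‖v‖) (Real.log ‖w‖) := by
      rw [Real.log_mul two_ne_zero (lt_max_of_lt_left hv').ne',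
        (Real.strictMonoOn_log.monotoneOn).map_max hv' hw']

theorem lt_of_mem_interior_convexHull {E : Type*} [AddCommGroup E] [TopologicalSpace E]
    [IsTopologicalAddGroup E] [Module ℝ E] [ContinuousSMul ℝ E] {φ : StrongDual ℝ E}
    (hφ : φ ≠ 0) {S : Set E} {c : ℝ} (hS : ∀ y ∈ S, φ y ≤ c) {y : E}
    (hy : y ∈ interior (convexHull ℝ S)) : φ y < c := by
  have hsub : φ '' interior (convexHull ℝ S) ⊆ Set.Iic c := by
    rintro _ ⟨x, hx, rfl⟩
    exact convexHull_min hS (convex_halfSpace_le φ.isLinear c) (interior_subset hx)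
  have hopen : IsOpen (φ '' interior (convexHull ℝ S)) :=
    φ.isOpenMap_of_ne_zero hφ _ isOpen_interior
  simpa using interior_mono hsub (hopen.subset_interior_iff.2 le_rfl ⟨y, hy, rfl⟩)

theorem exists_pos_mul_norm_le_of_homogeneous {E : Type*} [NormedAddCommGroup E]
    [NormedSpace ℝ E] [ProperSpace E] [Nontrivial E] {f : E → ℝ} (hf : Continuous f)
    (hsmul : ∀ c : ℝ, 0 ≤ c → ∀ x, f (c • x) = c * f x) (hpos : ∀ x ≠ 0, 0 < f x) :
    ∃ ε > 0, ∀ x, ε * ‖x‖ ≤ f x := by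
  obtain ⟨u, hu, hmin⟩ := (isCompact_sphere (0 : E) 1).exists_isMinOn
    (NormedSpace.sphere_nonempty.2 zero_le_one) hf.continuousOn
  have hu0 : u ≠ 0 := ne_zero_of_mem_unit_sphere ⟨u, hu⟩
  refine ⟨f u, hpos u hu0, fun x => ?_⟩
  rcases eq_or_ne x 0 with rfl | hx
  · simpa using (hsmul 0 le_rfl 0).ge
  · have hx' : ‖x‖⁻¹ • x ∈ Metric.sphere (0 : E) 1 := by
      simp [norm_smul, hx]
    calc f u * ‖x‖ ≤ f (‖x‖⁻¹ • x) * ‖x‖ := by gcongr; exact hmin hx'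
      _ = f x := by
        rw [hsmul _ (by positivity), mul_comm, ← mul_assoc,
          mul_inv_cancel₀ (norm_ne_zero_iff.2 hx), one_mul]

theorem IsCompact.exists_abs_log_norm_le {ι E : Type*} [Fintype ι] [NormedAddCommGroup E]
    {K : Set (ι → E)} (hK : IsCompact K) (hK0 : ∀ g ∈ K, ∀ j, g j ≠ 0) :
    ∃ B, ∀ g ∈ K, ∀ j, |Real.log ‖g j‖| ≤ B := by
  obtain ⟨B, hB⟩ := hK.exists_bound_of_continuousOn (f := fun g j => Real.log ‖g j‖)
    (continuousOn_pi.2 fun j => ContinuousOn.log (by fun_prop)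
      fun g hg => norm_ne_zero_iff.2 (hK0 g hg j))
  exact ⟨B, fun g hg j => (norm_le_pi_norm (fun j => Real.log ‖g j‖) j).trans (hB g hg)⟩

namespace CircuitSystem

/-- The largest minus the second largest of `p, q, r`: it is `≤ 0` iff the maximum is attained
at least twice. -/
def maxGap3 (p q r : ℝ) : ℝ := max (p - max q r) (max (q - max p r) (r - max p q))

theorem maxGap3_le_iff {p q r C : ℝ} :
    maxGap3 p q r ≤ C ↔ p ≤ C + max q r ∧ q ≤ C + max p r ∧ r ≤ C + max p q := by
  simp only [maxGap3, max_le_iff, sub_le_iff_le_add]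

theorem maxGap3_mul {c : ℝ} (hc : 0 ≤ c) (p q r : ℝ) :
    maxGap3 (c * p) (c * q) (c * r) = c * maxGap3 p q r := by
  simp only [maxGap3, ← mul_max_of_nonneg _ _ hc, ← mul_sub]

theorem _root_.Continuous.maxGap3 {α : Type*} [TopologicalSpace α] {f g h : α → ℝ}
    (hf : Continuous f) (hg : Continuous g) (hh : Continuous h) :
    Continuous fun x => maxGap3 (f x) (g x) (h x) := by
  unfold CircuitSystem.maxGap3; fun_prop

theorem maxGap3_le_add_of_abs_sub_le {p q r p' q' r' B : ℝ} (hp : |p - p'| ≤ B)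
    (hq : |q - q'| ≤ B) (hr : |r - r'| ≤ B) : maxGap3 p q r ≤ maxGap3 p' q' r' + 2 * B := by
  obtain ⟨hp', hq', hr'⟩ := maxGap3_le_iff.1 (le_refl (maxGap3 p' q' r'))
  rw [abs_le] at hp hq hr
  refine maxGap3_le_iff.2 ⟨?_, ?_, ?_⟩ <;>
    grind

theorem eq_and_le_of_maxGap3_nonpos {p q r : ℝ} (h : maxGap3 p q r ≤ 0) :
    (p = q ∧ r ≤ p) ∨ (p = r ∧ q ≤ p) ∨ (q = r ∧ p ≤ q) := by
  simp only [maxGap3_le_iff, zero_add, le_max_iff] at h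
  obtain ⟨h₁ | h₁, h₂ | h₂, h₃ | h₃⟩ := h <;> grind

theorem maxGap3_nonpos_cases {p₀ p₁ p₂ p₃ : ℝ} (h₀ : maxGap3 p₀ p₂ p₃ ≤ 0)
    (h₁ : maxGap3 p₁ p₂ p₃ ≤ 0) :
    (p₀ = p₂ ∧ p₀ = p₃) ∨ (p₁ = p₂ ∧ p₁ = p₃) ∨ (p₀ = p₁ ∧ p₀ = p₂) ∨ (p₀ = p₁ ∧ p₀ = p₃) ∨
      (p₂ = p₃ ∧ p₀ < p₂ ∧ p₁ < p₂) := by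
  rcases eq_and_le_of_maxGap3_nonpos h₀ with ⟨e₀, l₀⟩ | ⟨e₀, l₀⟩ | ⟨e₀, l₀⟩ <;>
    rcases eq_and_le_of_maxGap3_nonpos h₁ with ⟨e₁, l₁⟩ | ⟨e₁, l₁⟩ | ⟨e₁, l₁⟩ <;>
    grind

theorem maxGap3_log_norm_le {E : Type*} [NormedAddCommGroup E] {u v w : E}
    (h : u + v + w = 0) (hu : u ≠ 0) (hv : v ≠ 0) (hw : w ≠ 0) :
    maxGap3 (Real.log ‖u‖) (Real.log ‖v‖) (Real.log ‖w‖) ≤ Real.log 2 :=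
  maxGap3_le_iff.2 ⟨log_norm_le_log_two_add_max h hu hv hw,
    log_norm_le_log_two_add_max (by rw [← h]; abel) hv hu hw,
    log_norm_le_log_two_add_max (by rw [← h]; abel) hw hu hv⟩

def pairing {n : ℕ} (a : Fin n → ℤ) (x : Fin n → ℝ) : ℝ := ∑ i, (a i : ℝ) * x i

theorem pairing_smul {n : ℕ} (a : Fin n → ℤ) (c : ℝ) (x : Fin n → ℝ) :
    pairing a (c • x) = c * pairing a x := by
  simp only [pairing, Pi.smul_apply, smul_eq_mul, Finset.mul_sum]
  exact Finset.sum_congr rfl fun i _ => by ring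

theorem continuous_pairing {n : ℕ} (a : Fin n → ℤ) : Continuous (pairing a) := by
  unfold pairing; fun_prop

theorem lmon_ne_zero {n : ℕ} (a : Fin n → ℤ) {z : Fin n → ℂ} (hz : ∀ i, z i ≠ 0) :
    lmon a z ≠ 0 :=
  Finset.prod_ne_zero_iff.2 fun i _ => zpow_ne_zero _ (hz i)

theorem log_norm_lmon {n : ℕ} (a : Fin n → ℤ) {z : Fin n → ℂ} (hz : ∀ i, z i ≠ 0) :
    Real.log ‖lmon a z‖ = pairing a fun i => Real.log ‖z i‖ := by
  rw [lmon, norm_prod, Real.log_prod fun i _ => norm_ne_zero_iff.2 (zpow_ne_zero _ (hz i))]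
  simp only [norm_zpow, Real.log_zpow, pairing]

theorem maxGap3_pairing_le {n : ℕ} {a b d : Fin n → ℤ} {z : Fin n → ℂ} (hz : ∀ i, z i ≠ 0)
    {c₁ c₂ : ℂ} {B : ℝ} (hc₁ : c₁ ≠ 0) (hc₂ : c₂ ≠ 0) (hB₁ : |Real.log ‖c₁‖| ≤ B)
    (hB₂ : |Real.log ‖c₂‖| ≤ B) (h : c₁ * lmon a z + lmon b z + c₂ * lmon d z = 0) :
    maxGap3 (pairing a fun i => Real.log ‖z i‖) (pairing b fun i => Real.log ‖z i‖)
      (pairing d fun i => Real.log ‖z i‖) ≤ Real.log 2 + 2 * B := by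
  have hB : 0 ≤ B := (abs_nonneg _).trans hB₁
  have log_norm_term {c : ℂ} (hc : c ≠ 0) (e : Fin n → ℤ) :
      Real.log ‖c * lmon e z‖ = Real.log ‖c‖ + pairing e fun i => Real.log ‖z i‖ := by
    rw [norm_mul, Real.log_mul (norm_ne_zero_iff.2 hc) (norm_ne_zero_iff.2 (lmon_ne_zero e hz)),
      log_norm_lmon e hz]
  calc _ ≤ maxGap3 (Real.log ‖c₁ * lmon a z‖) (Real.log ‖lmon b z‖)
        (Real.log ‖c₂ * lmon d z‖) + 2 * B := by
        apply maxGap3_le_add_of_abs_sub_le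
        · rwa [log_norm_term hc₁, sub_add_cancel_right, abs_neg]
        · rwa [log_norm_lmon b hz, sub_self, abs_zero]
        · rwa [log_norm_term hc₂, sub_add_cancel_right, abs_neg]
    _ ≤ Real.log 2 + 2 * B := by
      gcongr
      exact maxGap3_log_norm_le h (mul_ne_zero hc₁ (lmon_ne_zero a hz)) (lmon_ne_zero b hz)
        (mul_ne_zero hc₂ (lmon_ne_zero d hz))

theorem galeB_eq_zero_of_pairing_eq {n : ℕ} (a : Fin (n + 2) → Fin n → ℤ) (k : Fin (n + 2))
    {u : Fin n → ℝ} (hu : u ≠ 0) {c : ℝ} (h : ∀ j ≠ k, pairing (a j) u = c) : galeB a k = 0 := by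
  set M : Matrix (Fin (n + 1)) (Fin (n + 1)) ℤ := Matrix.of fun i j => hatA a i (k.succAbove j)
  suffices hM : (M.map (Int.cast : ℤ → ℝ)).det = 0 by
    rw [galeB, show M.det = 0 by exact_mod_cast (Int.cast_det M).trans hM, mul_zero]
  refine Matrix.exists_vecMul_eq_zero_iff.1
    ⟨Fin.cons (-c) u, fun h0 => hu (funext fun i => by simpa using congrFun h0 i.succ), ?_⟩
  funext j
  simp [M, Matrix.vecMul, dotProduct, Fin.sum_univ_succ, hatA, ← h _ (Fin.succAbove_ne k j),
    pairing, mul_comm]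

def circuitDefect {n : ℕ} (a : Fin 4 → Fin n → ℤ) (x : Fin n → ℝ) : ℝ :=
  max (maxGap3 (pairing (a 0) x) (pairing (a 2) x) (pairing (a 3) x))
    (maxGap3 (pairing (a 1) x) (pairing (a 2) x) (pairing (a 3) x))

theorem circuitDefect_smul {n : ℕ} (a : Fin 4 → Fin n → ℤ) {c : ℝ} (hc : 0 ≤ c)
    (x : Fin n → ℝ) : circuitDefect a (c • x) = c * circuitDefect a x := by
  simp only [circuitDefect, pairing_smul, maxGap3_mul hc, mul_max_of_nonneg _ _ hc]

theorem continuous_circuitDefect {n : ℕ} (a : Fin 4 → Fin n → ℤ) :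
    Continuous (circuitDefect a) := by
  have h := continuous_pairing (n := n)
  exact ((h _).maxGap3 (h _) (h _)).max ((h _).maxGap3 (h _) (h _))

theorem circuitDefect_pos {a : Fin 4 → Fin 2 → ℤ} (ha : NondegCircuit a)
    (hline : ∃ t : ℝ, (fun i => (1 - t) * (a 2 i : ℝ) + t * (a 3 i : ℝ)) ∈
      interior (convexHull ℝ (realPts a)))
    {u : Fin 2 → ℝ} (hu : u ≠ 0) : 0 < circuitDefect a u := by
  by_contra! h
  set p : Fin 4 → ℝ := fun k => pairing (a k) u
  have not_collinear (k : Fin 4) {c : ℝ} (hk : ∀ j ≠ k, p j = c) : False :=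
    ha k (galeB_eq_zero_of_pairing_eq a k hu hk)
  rcases maxGap3_nonpos_cases (max_le_iff.1 h).1 (max_le_iff.1 h).2 with
    ⟨e₁, e₂⟩ | ⟨e₁, e₂⟩ | ⟨e₁, e₂⟩ | ⟨e₁, e₂⟩ | ⟨e, l₀, l₁⟩
  · exact not_collinear 1 (c := p 0) fun j hj => by fin_cases j <;> simp_all [p]
  · exact not_collinear 0 (c := p 1) fun j hj => by fin_cases j <;> simp_all [p]
  · exact not_collinear 3 (c := p 0) fun j hj => by fin_cases j <;> simp_all [p]
  · exact not_collinear 2 (c := p 0) fun j hj => by fin_cases j <;> simp_all [p]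
  · obtain ⟨t, ht⟩ := hline
    let φ : StrongDual ℝ (Fin 2 → ℝ) := ∑ i, u i • ContinuousLinearMap.proj i
    have hφ (y : Fin 2 → ℝ) : φ y = ∑ i, y i * u i := by simp [φ, mul_comm]
    have hφ0 : φ ≠ 0 := fun h0 => hu <| dotProduct_self_eq_zero.1 <| by
      simpa [hφ, dotProduct] using DFunLike.congr_fun h0 u
    have hφa (k : Fin 4) : φ (fun i => (a k i : ℝ)) = p k := by
      simp [hφ, p, pairing, mul_comm]
    have hle : ∀ y ∈ realPts a, φ y ≤ p 2 := by
      rintro _ ⟨k, rfl⟩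
      rw [hφa]
      fin_cases k
      exacts [l₀.le, l₁.le, le_rfl, e.ge]
    have hlt := lt_of_mem_interior_convexHull hφ0 hle ht
    have hq : φ (fun i => (1 - t) * (a 2 i : ℝ) + t * (a 3 i : ℝ)) = p 2 := by
      change φ ((1 - t) • (fun i => (a 2 i : ℝ)) + t • fun i => (a 3 i : ℝ)) = p 2
      rw [map_add, map_smul, map_smul, hφa, hφa, smul_eq_mul, smul_eq_mul,
        show p 3 = p 2 from e.symm]
      ring
    exact hlt.ne hq

end CircuitSystem

open CircuitSystem

/-- If the line through `a₂` and `a₃` meets the interior of the Newton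
polytope, then over any compact set of nonvanishing coefficients the amoebas of the circuit
system `F₁ = F₂ = 0` are uniformly bounded. -/
theorem amoeba_bounded_over_compact (a : Fin 4 → Fin 2 → ℤ) (ha : NondegCircuit a)
    (hline : ∃ t : ℝ, (fun i => (1 - t) * (a 2 i : ℝ) + t * (a 3 i : ℝ)) ∈
      interior (convexHull ℝ (realPts a)))
    (K : Set (Fin 4 → ℂ)) (hK : IsCompact K) (hK0 : ∀ g ∈ K, ∀ j, g j ≠ 0) :
    Bornology.IsBounded {w : Fin 2 → ℝ | ∃ g ∈ K, ∃ z : Fin 2 → ℂ,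
      (∀ i, z i ≠ 0) ∧ sysF1 a g z = 0 ∧ sysF2 a g z = 0 ∧
      w = fun i => Real.log ‖z i‖} := by
  obtain ⟨B, hB⟩ := hK.exists_abs_log_norm_le hK0
  obtain ⟨ε, hε, hεx⟩ := exists_pos_mul_norm_le_of_homogeneous (continuous_circuitDefect a)
    (fun _ hc => circuitDefect_smul a hc) (fun u hu => circuitDefect_pos ha hline hu)
  refine isBounded_iff_forall_norm_le.2 ⟨(Real.log 2 + 2 * B) / ε, ?_⟩
  rintro _ ⟨g, hg, z, hz, h₁, h₂, rfl⟩
  rw [le_div_iff₀' hε]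
  refine (hεx _).trans (max_le ?_ ?_)
  · exact maxGap3_pairing_le hz (hK0 g hg 0) (hK0 g hg 1) (hB g hg 0) (hB g hg 1) h₁
  · exact maxGap3_pairing_le hz (hK0 g hg 2) (hK0 g hg 3) (hB g hg 2) (hB g hg 3) h₂
end

section
/- Let A = {a_0, a_1, a_2, a_3} ⊂ ℤ² be a nondegenerate planar circuit and consider the system F_1(z) = f_1 z^{a_0} + z^{a_2} + f_2 z^{a_3}, F_2(z) = f_3 z^{a_1} + z^{a_2} + f_4 z^{a_3}, with f_1, f_3 ∈ ℂ∖{0} and f_2, f_4 ∈ ℝ∖{0}. Assume f is nonreal, i.e. there is no θ ∈ T² at which both F_1 and F_2 are real. Let g(z) = ε c z^a + ε' c' z^{a'} be any binomial obtained by choosing two monomials c z^a and c' z^{a'} with a ≠ a' from among the monomials f_1 z^{a_0}, z^{a_2}, f_2 z^{a_3} of F_1 and f_3 z^{a_1}, z^{a_2}, f_4 z^{a_3} of F_2, with signs ε, ε' ∈ {±1}. If f_2 and f_4 have opposite signs, then the coamoeba C_g is disjoint from L_f = C_{F_1} ∩ C_{F_2}. If f_2 and f_4 have equal signs, then C_g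 is disjoint from L_f except possibly when g = ±(f_1 z^{a_0} − f_3 z^{a_1}). -/
/-
At a point `θ` of `L_f`, write `x = f₁e^{i⟨a₀,θ⟩}`, `x' = f₃e^{i⟨a₁,θ⟩}`, `y = e^{i⟨a₂,θ⟩}`,
`w = e^{i⟨a₃,θ⟩}`. A zero of `F₁` with argument `θ` gives a relation `r₀x + r₁y + r₂f₂w = 0`
with positive `rₖ` (the moduli of its monomials), and `F₂` gives `s₀x' + s₁y + s₂f₄w = 0`.
If `y` and `w` were ℝ-collinear, both relations would put all rotated coefficients on one real
line, contradicting nonreality; hence each relation makes its three vectors pairwise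
non-collinear. A zero of `g` with argument `θ` makes the two rotated coefficients of `g`
ℝ-collinear, so they must be `x` and `x'`. Eliminating `x` between the two relations then
gives `s₁r₂f₂ = r₁s₂f₄`, so `f₂f₄ > 0`, and shows that `x` and `x'` point the same way, so
the two signs of `g` are opposite.
-/

open MeasureTheory Complex

noncomputable def phase {n : ℕ} (b : Fin n → ℤ) (θ : Fin n → ℝ) : ℂ :=
  cexp ((∑ i, (b i : ℝ) * θ i) * I)

lemma phase_eq_prod_toCircle {n : ℕ} (b : Fin n → ℤ) (θ : Fin n → ℝ) :
    phase b θ = ∏ i, ((toTorus θ i).toCircle : ℂ) ^ b i := by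
  have h2π : 2 * Real.pi ≠ 0 := by positivity
  simp only [phase, toTorus, AddCircle.toCircle_apply_mk, Circle.coe_exp, div_self h2π, one_mul,
    ← Complex.exp_int_mul, ← Complex.exp_sum]
  push_cast
  rw [Finset.sum_mul]
  exact congrArg cexp (Finset.sum_congr rfl fun i _ => by ring)

lemma phase_congr {n : ℕ} (b : Fin n → ℤ) {θ θ' : Fin n → ℝ} (h : toTorus θ = toTorus θ') :
    phase b θ = phase b θ' := by
  rw [phase_eq_prod_toCircle, h, ← phase_eq_prod_toCircle]

lemma lmon_eq_mul_phase_arg {n : ℕ} (b : Fin n → ℤ) (z : Fin n → ℂ) :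
    lmon b z = (∏ i, ‖z i‖ ^ b i : ℝ) * phase b fun i => (z i).arg := by
  have hsum : ((∑ i, (b i : ℝ) * (z i).arg : ℝ) : ℂ) * I = ∑ i, (b i : ℂ) * ((z i).arg * I) := by
    push_cast [Finset.sum_mul]
    exact Finset.sum_congr rfl fun i _ => by ring
  rw [lmon, phase, hsum, Complex.exp_sum, Complex.ofReal_prod, ← Finset.prod_mul_distrib]
  refine Finset.prod_congr rfl fun i _ => ?_
  rw [Complex.exp_int_mul, Complex.ofReal_zpow, ← mul_zpow, Complex.norm_mul_exp_arg_mul_I]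

lemma exists_pos_lmon_eq_mul_phase {n : ℕ} (b : Fin n → ℤ) {z : Fin n → ℂ} (hz : ∀ i, z i ≠ 0)
    {θ : Fin n → ℝ} (hθ : toTorus θ = toTorus fun i => (z i).arg) :
    ∃ r : ℝ, 0 < r ∧ lmon b z = r * phase b θ :=
  ⟨_, Finset.prod_pos fun i _ => zpow_pos (norm_pos_iff.mpr (hz i)) _,
    by rw [lmon_eq_mul_phase_arg, phase_congr b hθ]⟩

lemma exists_pos_relation_of_mem_coamoebaF_binomial {n : ℕ} {c₀ c₁ : ℂ} {b₀ b₁ : Fin n → ℤ}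
    {θ : Fin n → ℝ} (h : toTorus θ ∈ coamoebaF fun z => c₀ * lmon b₀ z + c₁ * lmon b₁ z) :
    ∃ r₀ r₁ : ℝ, 0 < r₀ ∧ 0 < r₁ ∧ r₀ * (c₀ * phase b₀ θ) + r₁ * (c₁ * phase b₁ θ) = 0 := by
  obtain ⟨z, hz, hzero, hθ⟩ := h
  obtain ⟨r₀, hr₀, h₀⟩ := exists_pos_lmon_eq_mul_phase b₀ hz hθ
  obtain ⟨r₁, hr₁, h₁⟩ := exists_pos_lmon_eq_mul_phase b₁ hz hθ
  exact ⟨r₀, r₁, hr₀, hr₁, by simp only [h₀, h₁] at hzero; linear_combination hzero⟩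

lemma exists_pos_relation_of_mem_coamoebaF_trinomial {n : ℕ} {c₀ c₁ c₂ : ℂ}
    {b₀ b₁ b₂ : Fin n → ℤ} {θ : Fin n → ℝ}
    (h : toTorus θ ∈ coamoebaF fun z => c₀ * lmon b₀ z + c₁ * lmon b₁ z + c₂ * lmon b₂ z) :
    ∃ r₀ r₁ r₂ : ℝ, 0 < r₀ ∧ 0 < r₁ ∧ 0 < r₂ ∧
      r₀ * (c₀ * phase b₀ θ) + r₁ * (c₁ * phase b₁ θ) + r₂ * (c₂ * phase b₂ θ) = 0 := by
  obtain ⟨z, hz, hzero, hθ⟩ := h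
  obtain ⟨r₀, hr₀, h₀⟩ := exists_pos_lmon_eq_mul_phase b₀ hz hθ
  obtain ⟨r₁, hr₁, h₁⟩ := exists_pos_lmon_eq_mul_phase b₁ hz hθ
  obtain ⟨r₂, hr₂, h₂⟩ := exists_pos_lmon_eq_mul_phase b₂ hz hθ
  exact ⟨r₀, r₁, r₂, hr₀, hr₁, hr₂, by simp only [h₀, h₁, h₂] at hzero; linear_combination hzero⟩

/-- `Im (conj x * y)`; it vanishes iff `x` and `y` are `ℝ`-collinear. -/
def wedge (x y : ℂ) : ℝ := x.re * y.im - x.im * y.re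

lemma wedge_swap (x y : ℂ) : wedge y x = -wedge x y := by
  simp only [wedge]; ring

@[simp] lemma wedge_self (x : ℂ) : wedge x x = 0 := by
  simp only [wedge]; ring

@[simp] lemma wedge_zero_left (y : ℂ) : wedge 0 y = 0 := by
  simp [wedge]

@[simp] lemma wedge_add_left (x x' y : ℂ) : wedge (x + x') y = wedge x y + wedge x' y := by
  simp only [wedge, Complex.add_re, Complex.add_im]; ring

@[simp] lemma wedge_ofReal_mul_left (r : ℝ) (x y : ℂ) : wedge (r * x) y = r * wedge x y := by
  simp only [wedge, Complex.re_ofReal_mul, Complex.im_ofReal_mul]; ring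

@[simp] lemma wedge_ofReal_mul_right (r : ℝ) (x y : ℂ) : wedge x (r * y) = r * wedge x y := by
  simp only [wedge, Complex.re_ofReal_mul, Complex.im_ofReal_mul]; ring

lemma exists_ofReal_mul_of_wedge_eq_zero {x y : ℂ} (hy : y ≠ 0) (h : wedge x y = 0) :
    ∃ t : ℝ, x = t * y := by
  have hn : y.re * y.re + y.im * y.im ≠ 0 := by
    rwa [← Complex.normSq_apply, Complex.normSq_eq_zero.ne]
  refine ⟨(x.re * y.re + x.im * y.im) / (y.re * y.re + y.im * y.im), Complex.ext ?_ ?_⟩ <;>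
    simp only [Complex.re_ofReal_mul, Complex.im_ofReal_mul] <;>
    rw [div_mul_eq_mul_div, eq_div_iff hn] <;>
    simp only [wedge] at h
  · linear_combination y.im * h
  · linear_combination -y.re * h

lemma wedge_relation {x y w : ℂ} {r₀ r₁ r₂ : ℝ} (h : r₀ * x + r₁ * y + r₂ * w = 0) (v : ℂ) :
    r₀ * wedge x v + r₁ * wedge y v + r₂ * wedge w v = 0 := by
  simpa using congrArg (wedge · v) h

lemma wedge_eq_zero_of_relation {x x' : ℂ} {p q : ℝ} (hp : p ≠ 0) (h : p * x + q * x' = 0) :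
    wedge x x' = 0 := by
  simpa [hp] using congrArg (wedge · x') h

lemma wedge_ne_zero_of_relation {x y w : ℂ} {r₀ r₁ r₂ : ℝ} (hr₁ : r₁ ≠ 0) (hr₂ : r₂ ≠ 0)
    (h : r₀ * x + r₁ * y + r₂ * w = 0) (hyw : wedge y w ≠ 0) :
    wedge x y ≠ 0 ∧ wedge x w ≠ 0 := by
  have hy := wedge_relation h y
  have hw := wedge_relation h w
  rw [wedge_self, wedge_swap y w] at hy
  rw [wedge_self] at hw
  constructor <;> intro h0 <;> simp_all

lemma realAtMons_of_relation {n : ℕ} {c₀ c₁ c₂ : ℂ} {b₀ b₁ b₂ : Fin n → ℤ} {θ : Fin n → ℝ}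
    {r₀ r₁ r₂ : ℝ} (hr₀ : r₀ ≠ 0) (hc₂ : c₂ ≠ 0)
    (h : r₀ * (c₀ * phase b₀ θ) + r₁ * (c₁ * phase b₁ θ) + r₂ * (c₂ * phase b₂ θ) = 0)
    (h₁₂ : wedge (c₁ * phase b₁ θ) (c₂ * phase b₂ θ) = 0) :
    RealAtMons [(c₀, b₀), (c₁, b₁), (c₂, b₂)] θ := by
  have hw : c₂ * phase b₂ θ ≠ 0 := mul_ne_zero hc₂ (Complex.exp_ne_zero _)
  have h₀₂ : wedge (c₀ * phase b₀ θ) (c₂ * phase b₂ θ) = 0 := by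
    simpa [h₁₂, hr₀] using wedge_relation h (c₂ * phase b₂ θ)
  refine ⟨_, hw, ?_⟩
  simp only [List.mem_cons, List.not_mem_nil, or_false]
  rintro m (rfl | rfl | rfl)
  · exact exists_ofReal_mul_of_wedge_eq_zero hw h₀₂
  · exact exists_ofReal_mul_of_wedge_eq_zero hw h₁₂
  · exact ⟨1, by rw [Complex.ofReal_one, one_mul]; rfl⟩

lemma wedge_ne_zero_of_not_realAtMons {n : ℕ} {c₀ c₀' c₁ : ℂ} {b₀ b₀' b₁ b₂ : Fin n → ℤ}
    {θ : Fin n → ℝ} {l l' r₀ r₁ r₂ s₀ s₁ s₂ : ℝ} (hl : l ≠ 0) (hl' : l' ≠ 0) (hr₀ : r₀ ≠ 0)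
    (hs₀ : s₀ ≠ 0)
    (h₁ : r₀ * (c₀ * phase b₀ θ) + r₁ * (c₁ * phase b₁ θ) + r₂ * (l * phase b₂ θ) = 0)
    (h₂ : s₀ * (c₀' * phase b₀' θ) + s₁ * (c₁ * phase b₁ θ) + s₂ * (l' * phase b₂ θ) = 0)
    (hnonreal : ¬(RealAtMons [(c₀, b₀), (c₁, b₁), ((l : ℂ), b₂)] θ ∧
      RealAtMons [(c₀', b₀'), (c₁, b₁), ((l' : ℂ), b₂)] θ)) :
    wedge (c₁ * phase b₁ θ) (phase b₂ θ) ≠ 0 := by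
  intro h
  have hm : ∀ m : ℝ, wedge (c₁ * phase b₁ θ) (m * phase b₂ θ) = 0 := fun m => by
    rw [wedge_ofReal_mul_right, h, mul_zero]
  exact hnonreal ⟨realAtMons_of_relation hr₀ (ofReal_ne_zero.2 hl) h₁ (hm l),
    realAtMons_of_relation hs₀ (ofReal_ne_zero.2 hl') h₂ (hm l')⟩

section TwoRelations

variable {x x' y w : ℂ} {r₀ r₁ r₂ s₀ s₁ s₂ : ℝ}

lemma wedge_mul_wedge_pos (hr₀ : 0 < r₀) (hr₁ : 0 < r₁) (hs₀ : 0 < s₀) (hs₁ : 0 < s₁)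
    (h₁ : r₀ * x + r₁ * y + r₂ * w = 0) (h₂ : s₀ * x' + s₁ * y + s₂ * w = 0)
    (hyw : wedge y w ≠ 0) : 0 < wedge x w * wedge x' w := by
  have e₁ := wedge_relation h₁ w
  have e₂ := wedge_relation h₂ w
  rw [wedge_self] at e₁ e₂
  have key : (r₀ * s₀) * (wedge x w * wedge x' w) = (r₁ * s₁) * wedge y w ^ 2 := by
    linear_combination (s₀ * wedge x' w) * e₁ - (r₁ * wedge y w) * e₂
  refine pos_of_mul_pos_right ?_ (mul_pos hr₀ hs₀).le
  rw [key]
  exact mul_pos (mul_pos hr₁ hs₁) (by positivity)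

lemma mul_pos_of_wedge_eq_zero (hr₁ : 0 < r₁) (hs₁ : 0 < s₁) (hr₂ : r₂ ≠ 0)
    (h₁ : r₀ * x + r₁ * y + r₂ * w = 0) (h₂ : s₀ * x' + s₁ * y + s₂ * w = 0)
    (hxw : wedge x w ≠ 0) (hxx' : wedge x x' = 0) : 0 < r₂ * s₂ := by
  have e₁ := wedge_relation h₁ x
  have e₂ := wedge_relation h₂ x
  rw [wedge_self, wedge_swap x w] at e₁
  rw [wedge_swap x x', hxx', wedge_swap x w] at e₂
  have hrs : s₁ * r₂ = r₁ * s₂ := by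
    refine mul_right_cancel₀ (neg_ne_zero.mpr hxw) ?_
    linear_combination s₁ * e₁ - r₁ * e₂
  refine pos_of_mul_pos_right ?_ hr₁.le
  calc 0 < s₁ * r₂ ^ 2 := by positivity
    _ = r₁ * (r₂ * s₂) := by linear_combination r₂ * hrs

lemma mul_neg_of_wedge_mul_wedge_pos {p q : ℝ} (hp : p ≠ 0)
    (h : p * x + q * x' = 0) (hpos : 0 < wedge x w * wedge x' w) : p * q < 0 := by
  have e : p * wedge x w + q * wedge x' w = 0 := by simpa using congrArg (wedge · w) h
  have key : p * q * wedge x' w ^ 2 = -(p ^ 2 * (wedge x w * wedge x' w)) := by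
    linear_combination (p * wedge x' w) * e
  exact neg_of_mul_neg_left (key ▸ neg_neg_of_pos (mul_pos (by positivity) hpos)) (sq_nonneg _)

lemma mul_pos_and_mul_neg_of_collinear (hr₀ : 0 < r₀) (hr₁ : 0 < r₁) (hs₀ : 0 < s₀)
    (hs₁ : 0 < s₁) (hr₂ : r₂ ≠ 0) (h₁ : r₀ * x + r₁ * y + r₂ * w = 0)
    (h₂ : s₀ * x' + s₁ * y + s₂ * w = 0) (hyw : wedge y w ≠ 0) {p q : ℝ} (hp : p ≠ 0)
    (h : p * x + q * x' = 0) : 0 < r₂ * s₂ ∧ p * q < 0 :=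
  ⟨mul_pos_of_wedge_eq_zero hr₁ hs₁ hr₂ h₁ h₂
      (wedge_ne_zero_of_relation hr₁.ne' hr₂ h₁ hyw).2 (wedge_eq_zero_of_relation hp h),
    mul_neg_of_wedge_mul_wedge_pos hp h (wedge_mul_wedge_pos hr₀ hr₁ hs₀ hs₁ h₁ h₂ hyw)⟩

end TwoRelations

/-- `v k` and `u k` stand for the exponent and the rotated coefficient of the `k`-th entry of
`(f₁z^{a₀}, z^{a₂}, f₂z^{a₃}, f₃z^{a₁}, z^{a₂}, f₄z^{a₃})`. -/
lemma eq_zero_three_or_eq_three_zero_of_wedge_eq_zero {α : Type*} {v : Fin 6 → α}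
    (hv₁₄ : v 1 = v 4) (hv₂₅ : v 2 = v 5) {x x' y w : ℂ} {l₂ l₄ : ℝ} {u : Fin 6 → ℂ}
    (hu : u = ![x, y, l₂ * w, x', y, l₄ * w]) (hl₂ : l₂ ≠ 0) (hl₄ : l₄ ≠ 0)
    (hxy : wedge x y ≠ 0) (hxw : wedge x w ≠ 0) (hyw : wedge y w ≠ 0) (hx'y : wedge x' y ≠ 0)
    (hx'w : wedge x' w ≠ 0) {i j : Fin 6} (hne : v i ≠ v j) (h : wedge (u i) (u j) = 0) :
    (i = 0 ∧ j = 3) ∨ (i = 3 ∧ j = 0) := by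
  subst hu
  have hyx := hxy; have hwx := hxw; have hwy := hyw; have hyx' := hx'y; have hwx' := hx'w
  rw [wedge_swap] at hyx hwx hwy hyx' hwx'
  fin_cases i <;> fin_cases j <;> simp_all

lemma collinear_pair_of_circuit_relations {x x' y w : ℂ} {l₂ l₄ r₀ r₁ r₂ s₀ s₁ s₂ : ℝ}
    (hr₀ : 0 < r₀) (hr₁ : 0 < r₁) (hr₂ : 0 < r₂) (hs₀ : 0 < s₀) (hs₁ : 0 < s₁) (hs₂ : 0 < s₂)
    (hl₂ : l₂ ≠ 0) (hl₄ : l₄ ≠ 0) (h₁ : r₀ * x + r₁ * y + r₂ * (l₂ * w) = 0)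
    (h₂ : s₀ * x' + s₁ * y + s₂ * (l₄ * w) = 0) (hyw : wedge y w ≠ 0)
    {α : Type*} {v : Fin 6 → α} (hv₁₄ : v 1 = v 4) (hv₂₅ : v 2 = v 5) {u : Fin 6 → ℂ}
    (hu : u = ![x, y, l₂ * w, x', y, l₄ * w]) {i j : Fin 6} (hne : v i ≠ v j) {p q : ℝ}
    (hp : p ≠ 0) (hq : q ≠ 0) (h : p * u i + q * u j = 0) :
    ((i = 0 ∧ j = 3) ∨ (i = 3 ∧ j = 0)) ∧ 0 < l₂ * l₄ ∧ p * q < 0 := by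
  have h₁' : r₀ * x + r₁ * y + (r₂ * l₂ : ℝ) * w = 0 := by push_cast; linear_combination h₁
  have h₂' : s₀ * x' + s₁ * y + (s₂ * l₄ : ℝ) * w = 0 := by push_cast; linear_combination h₂
  have hrl := mul_ne_zero hr₂.ne' hl₂
  obtain ⟨hxy, hxw⟩ := wedge_ne_zero_of_relation hr₁.ne' hrl h₁' hyw
  obtain ⟨hx'y, hx'w⟩ := wedge_ne_zero_of_relation hs₁.ne' (mul_ne_zero hs₂.ne' hl₄) h₂' hyw
  have hij := eq_zero_three_or_eq_three_zero_of_wedge_eq_zero hv₁₄ hv₂₅ hu hl₂ hl₄ hxy hxw hyw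
    hx'y hx'w hne (wedge_eq_zero_of_relation hp h)
  refine ⟨hij, ?_⟩
  subst hu
  obtain ⟨hrs, hpq⟩ : 0 < r₂ * l₂ * (s₂ * l₄) ∧ p * q < 0 := by
    rcases hij with ⟨rfl, rfl⟩ | ⟨rfl, rfl⟩
    · exact mul_pos_and_mul_neg_of_collinear hr₀ hr₁ hs₀ hs₁ hrl h₁' h₂' hyw hp h
    · have h : p * x' + q * x = 0 := h
      rw [mul_comm p]
      exact mul_pos_and_mul_neg_of_collinear hr₀ hr₁ hs₀ hs₁ hrl h₁' h₂' hyw hq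
        (by linear_combination h)
  refine ⟨pos_of_mul_pos_right ?_ (mul_pos hr₂ hs₂).le, hpq⟩
  simpa only [mul_mul_mul_comm] using hrs

lemma exists_ofReal_eq_of_eq_one_or_eq_neg_one {ε : ℂ} (h : ε = 1 ∨ ε = -1) :
    ∃ e : ℝ, ε = e ∧ (e = 1 ∨ e = -1) := by
  rcases h with rfl | rfl
  exacts [⟨1, by simp⟩, ⟨-1, by simp⟩]

lemma eq_neg_of_mul_mul_mul_neg {e e' t t' : ℝ} (he : e = 1 ∨ e = -1) (he' : e' = 1 ∨ e' = -1)
    (ht : 0 < t) (ht' : 0 < t') (h : t * e * (t' * e') < 0) : e' = -e := by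
  have := mul_pos ht ht'
  rcases he with rfl | rfl <;> rcases he' with rfl | rfl <;> norm_num at h ⊢ <;> linarith

theorem binomial_coamoeba_in_complement_general (a : Fin 4 → Fin 2 → ℤ)
    (f₁ f₃ : ℂ)
    (f₂ f₄ : ℝ) (hf₂ : f₂ ≠ 0) (hf₄ : f₄ ≠ 0)
    (hnonreal : ∀ θ : Fin 2 → ℝ,
      ¬(RealAtMons [(f₁, a 0), (1, a 2), ((f₂ : ℂ), a 3)] θ ∧
        RealAtMons [(f₃, a 1), (1, a 2), ((f₄ : ℂ), a 3)] θ))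
    (i j : Fin 6) (ε ε' : ℂ) (hε : ε = 1 ∨ ε = -1) (hε' : ε' = 1 ∨ ε' = -1) :
    let M : Fin 6 → ℂ × (Fin 2 → ℤ) :=
      ![(f₁, a 0), (1, a 2), ((f₂ : ℂ), a 3), (f₃, a 1), (1, a 2), ((f₄ : ℂ), a 3)]
    let g : (Fin 2 → ℂ) → ℂ := fun z =>
      ε * (M i).1 * lmon (M i).2 z + ε' * (M j).1 * lmon (M j).2 z
    let Lf : Set (Torus 2) :=
      coamoebaF (fun z => f₁ * lmon (a 0) z + lmon (a 2) z + (f₂ : ℂ) * lmon (a 3) z) ∩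
        coamoebaF (fun z => f₃ * lmon (a 1) z + lmon (a 2) z + (f₄ : ℂ) * lmon (a 3) z)
    (M i).2 ≠ (M j).2 →
      (f₂ * f₄ < 0 → Disjoint (coamoebaF g) Lf) ∧
      (0 < f₂ * f₄ →
        ¬((∀ z, g z = f₁ * lmon (a 0) z - f₃ * lmon (a 1) z) ∨
          (∀ z, g z = f₃ * lmon (a 1) z - f₁ * lmon (a 0) z)) →
        Disjoint (coamoebaF g) Lf) := by
  intro M g Lf hne
  suffices key : ∀ θT ∈ coamoebaF g, θT ∈ Lf → 0 < f₂ * f₄ ∧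
      ((∀ z, g z = f₁ * lmon (a 0) z - f₃ * lmon (a 1) z) ∨
        (∀ z, g z = f₃ * lmon (a 1) z - f₁ * lmon (a 0) z)) from
    ⟨fun hneg => Set.disjoint_left.2 fun θT hg hL => (key θT hg hL).1.not_gt hneg,
      fun _ hexc => Set.disjoint_left.2 fun θT hg hL => hexc (key θT hg hL).2⟩
  rintro θT hg ⟨h₁, h₂⟩
  obtain ⟨θ, rfl⟩ : ∃ θ, θT = toTorus θ := let ⟨_, _, _, h⟩ := h₁; ⟨_, h⟩
  obtain ⟨r₀, r₁, r₂, hr₀, hr₁, hr₂, rel₁⟩ :=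
    exists_pos_relation_of_mem_coamoebaF_trinomial (c₁ := 1) (by simpa only [one_mul] using h₁)
  obtain ⟨s₀, s₁, s₂, hs₀, hs₁, hs₂, rel₂⟩ :=
    exists_pos_relation_of_mem_coamoebaF_trinomial (c₁ := 1) (by simpa only [one_mul] using h₂)
  obtain ⟨t₀, t₁, ht₀, ht₁, relg⟩ := exists_pos_relation_of_mem_coamoebaF_binomial hg
  obtain ⟨e, rfl, he⟩ := exists_ofReal_eq_of_eq_one_or_eq_neg_one hε
  obtain ⟨e', rfl, he'⟩ := exists_ofReal_eq_of_eq_one_or_eq_neg_one hε'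
  have hyw := wedge_ne_zero_of_not_realAtMons hf₂ hf₄ hr₀.ne' hs₀.ne' rel₁ rel₂ (hnonreal θ)
  obtain ⟨hij, hf, hneg⟩ := collinear_pair_of_circuit_relations hr₀ hr₁ hr₂ hs₀ hs₁ hs₂ hf₂ hf₄
    rel₁ rel₂ hyw (v := fun k => (M k).2) rfl rfl (u := fun k => (M k).1 * phase (M k).2 θ)
    (by funext k; fin_cases k <;> rfl) hne (p := t₀ * e) (q := t₁ * e')
    (mul_ne_zero ht₀.ne' (by rcases he with rfl | rfl <;> norm_num))
    (mul_ne_zero ht₁.ne' (by rcases he' with rfl | rfl <;> norm_num))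
    (by push_cast; linear_combination relg)
  obtain rfl : e' = -e := eq_neg_of_mul_mul_mul_neg he he' ht₀ ht₁ hneg
  refine ⟨hf, ?_⟩
  rcases hij with ⟨rfl, rfl⟩ | ⟨rfl, rfl⟩ <;> rcases he with rfl | rfl <;>
    [left; right; right; left] <;> intro z <;>
    simp only [g, M, Matrix.cons_val, Matrix.cons_val_zero, ofReal_one, ofReal_neg] <;> ring

/-- Let `F₁ = f₁z^{a₀} + z^{a₂} + f₂z^{a₃}`, `F₂ = f₃z^{a₁} + z^{a₂} + f₄z^{a₃}`
with `f₂, f₄` real, and assume the system is nonreal. Let `g` be a binomial built from two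
monomials of the system (with distinct exponents and possibly flipped signs). If `f₂` and `f₄`
have opposite signs then `C_g` is disjoint from `L_f = C_{F₁} ∩ C_{F₂}`; if they have equal
signs the same holds except possibly when `g = ±(f₁z^{a₀} − f₃z^{a₁})`. -/
theorem binomial_coamoeba_in_complement (a : Fin 4 → Fin 2 → ℤ) (ha : NondegCircuit a)
    (f₁ f₃ : ℂ) (hf₁ : f₁ ≠ 0) (hf₃ : f₃ ≠ 0)
    (f₂ f₄ : ℝ) (hf₂ : f₂ ≠ 0) (hf₄ : f₄ ≠ 0)
    (hnonreal : ∀ θ : Fin 2 → ℝ,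
      ¬(RealAtMons [(f₁, a 0), (1, a 2), ((f₂ : ℂ), a 3)] θ ∧
        RealAtMons [(f₃, a 1), (1, a 2), ((f₄ : ℂ), a 3)] θ))
    (i j : Fin 6) (ε ε' : ℂ) (hε : ε = 1 ∨ ε = -1) (hε' : ε' = 1 ∨ ε' = -1) :
    let M : Fin 6 → ℂ × (Fin 2 → ℤ) :=
      ![(f₁, a 0), (1, a 2), ((f₂ : ℂ), a 3), (f₃, a 1), (1, a 2), ((f₄ : ℂ), a 3)]
    let g : (Fin 2 → ℂ) → ℂ := fun z =>
      ε * (M i).1 * lmon (M i).2 z + ε' * (M j).1 * lmon (M j).2 z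
    let Lf : Set (Torus 2) :=
      coamoebaF (fun z => f₁ * lmon (a 0) z + lmon (a 2) z + (f₂ : ℂ) * lmon (a 3) z) ∩
        coamoebaF (fun z => f₃ * lmon (a 1) z + lmon (a 2) z + (f₄ : ℂ) * lmon (a 3) z)
    (M i).2 ≠ (M j).2 →
      (f₂ * f₄ < 0 → Disjoint (coamoebaF g) Lf) ∧
      (0 < f₂ * f₄ →
        ¬((∀ z, g z = f₁ * lmon (a 0) z - f₃ * lmon (a 1) z) ∨
          (∀ z, g z = f₃ * lmon (a 1) z - f₁ * lmon (a 0) z)) →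
        Disjoint (coamoebaF g) Lf) :=
  binomial_coamoeba_in_complement_general a f₁ f₃ f₂ f₄ hf₂ hf₄ hnonreal i j ε ε' hε hε'
end
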